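/- Let U ⊆ ℝ³ be open, ν : U → ℝ three times continuously differentiable with |∇ν(x)| = 1 for all x ∈ U, and p₀ : U → ℝ a smooth function with Δp₀ = 0 on U. Set v = −∇p₀ and v_τ = v − (v·∇ν)∇ν. Let s ∈ ℂ with s ≠ 0, let z ∈ ℂ satisfy z² = s, and define u₀ = s^{−1}·( v − e^{−zν}·v_τ ). Then ∇·u₀ = −s^{−1}·e^{−zν}·(∇·v_τ) on U. Moreover, at every point x ∈ U with ν(x) = 0 and ∇p₀(x)·∇ν(x) = 0 one has u₀(x) = 0. -/

import Mathlib

/-- The Laplacian `Δf = ∑_{j=1}^{3} ∂²f/∂x_j²` of a function on `ℝ³`. -/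
noncomputable def lap {F : Type*} [NormedAddCommGroup F] [NormedSpace ℝ F]
    (f : EuclideanSpace ℝ (Fin 3) → F) (x : EuclideanSpace ℝ (Fin 3)) : F :=
  ∑ i : Fin 3,
    fderiv ℝ (fun y => fderiv ℝ f y (EuclideanSpace.single i 1)) x (EuclideanSpace.single i 1)

/-- Componentwise complexification of a real vector in `ℝ³`. -/
noncomputable def cV (v : EuclideanSpace ℝ (Fin 3)) : EuclideanSpace ℂ (Fin 3) :=
  WithLp.toLp 2 (fun i => (v i : ℂ))

/-- Divergence of a complex vector field on `ℝ³`. -/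
noncomputable def divC (f : EuclideanSpace ℝ (Fin 3) → EuclideanSpace ℂ (Fin 3))
    (x : EuclideanSpace ℝ (Fin 3)) : ℂ :=
  ∑ i : Fin 3, fderiv ℝ f x (EuclideanSpace.single i 1) i

/-- Divergence of a real vector field on `ℝ³`. -/
noncomputable def divR (f : EuclideanSpace ℝ (Fin 3) → EuclideanSpace ℝ (Fin 3))
    (x : EuclideanSpace ℝ (Fin 3)) : ℝ :=
  ∑ i : Fin 3, fderiv ℝ f x (EuclideanSpace.single i 1) i

noncomputable def cVL : EuclideanSpace ℝ (Fin 3) →L[ℝ] EuclideanSpace ℂ (Fin 3) :=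
  LinearMap.toContinuousLinearMap
    { toFun := cV
      map_add' := by intro a b; ext i; simp [cV]
      map_smul' := by intro c a; ext i; simp [cV] }

@[simp] lemma cVL_apply (u : EuclideanSpace ℝ (Fin 3)) (i : Fin 3) : cVL u i = (u i : ℂ) := rfl

@[simp] lemma cV_apply (u : EuclideanSpace ℝ (Fin 3)) (i : Fin 3) : cV u i = (u i : ℂ) := rfl

lemma grad_apply (f : EuclideanSpace ℝ (Fin 3) → ℝ) (x : EuclideanSpace ℝ (Fin 3)) (i : Fin 3) :
    gradient f x i = fderiv ℝ f x (EuclideanSpace.single i 1) := by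
  have h : (inner ℝ (gradient f x) (EuclideanSpace.single i (1:ℝ)) : ℝ)
      = fderiv ℝ f x (EuclideanSpace.single i 1) :=
    InnerProductSpace.toDual_symm_apply
  rw [EuclideanSpace.inner_single_right] at h
  simpa using h

lemma euclid_decomp (u : EuclideanSpace ℝ (Fin 3)) :
    ∑ i, u i • EuclideanSpace.single i (1:ℝ) = u := by
  ext j
  rw [Fin.sum_univ_three]
  simp [EuclideanSpace.single_apply]
  fin_cases j <;> simp

lemma gradientFormula (f : EuclideanSpace ℝ (Fin 3) → ℝ) :
    gradient f = fun y => ∑ i, (fderiv ℝ f y (EuclideanSpace.single i 1)) •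
      EuclideanSpace.single i (1:ℝ) := by
  funext y
  rw [← euclid_decomp (gradient f y)]
  exact Finset.sum_congr rfl fun i _ => by rw [grad_apply]

lemma gradient_diffAt {f : EuclideanSpace ℝ (Fin 3) → ℝ} {U : Set (EuclideanSpace ℝ (Fin 3))}
    {n : WithTop ℕ∞} (hU : IsOpen U) (hf : ContDiffOn ℝ n f U) (hn : 2 ≤ n)
    {x : EuclideanSpace ℝ (Fin 3)} (hx : x ∈ U) :
    DifferentiableAt ℝ (gradient f) x := by
  have h1 : ContDiffOn ℝ 1 (fderiv ℝ f) U :=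
    hf.fderiv_of_isOpen hU (le_trans (by norm_num) hn)
  have h2 : DifferentiableAt ℝ (fderiv ℝ f) x :=
    (h1.differentiableOn one_ne_zero x hx).differentiableAt (hU.mem_nhds hx)
  rw [gradientFormula]
  exact DifferentiableAt.fun_sum fun i _ =>
    (h2.clm_apply (differentiableAt_const _)).smul_const _

lemma fderiv_pi_apply {g : EuclideanSpace ℝ (Fin 3) → EuclideanSpace ℝ (Fin 3)}
    {x : EuclideanSpace ℝ (Fin 3)} (hg : DifferentiableAt ℝ g x)
    (u : EuclideanSpace ℝ (Fin 3)) (i : Fin 3) :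
    fderiv ℝ g x u i = fderiv ℝ (fun y => g y i) x u := by
  have h := (((PiLp.proj (𝕜 := ℝ) 2 (fun _ : Fin 3 => ℝ) i)).hasFDerivAt.comp x
    hg.hasFDerivAt).fderiv
  rw [show (fun y => g y i) = (PiLp.proj (𝕜 := ℝ) 2 (fun _ : Fin 3 => ℝ) i) ∘ g
    from rfl, h]
  rfl
/-- with `ν`, `p₀`, `v`, `v_τ`, `s`, `z`, `u₀` as in Statement 8, one has
`∇·u₀ = −s^{−1}·e^{−zν}·(∇·v_τ)` on `U`; moreover at every `x ∈ U` with `ν(x) = 0` and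
`∇p₀(x)·∇ν(x) = 0` one has `u₀(x) = 0`. -/
theorem statement9
    (U : Set (EuclideanSpace ℝ (Fin 3))) (hU : IsOpen U)
    (ν : EuclideanSpace ℝ (Fin 3) → ℝ)
    (hν : ContDiffOn ℝ 3 ν U)
    (hgrad : ∀ x ∈ U, ‖gradient ν x‖ = 1)
    (p₀ : EuclideanSpace ℝ (Fin 3) → ℝ)
    (hp₀ : ContDiffOn ℝ (⊤ : ℕ∞) p₀ U)
    (hharm : ∀ x ∈ U, lap p₀ x = 0)
    (s z : ℂ) (hs : s ≠ 0) (hz : z ^ 2 = s)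
    (v vτ : EuclideanSpace ℝ (Fin 3) → EuclideanSpace ℝ (Fin 3))
    (u₀ : EuclideanSpace ℝ (Fin 3) → EuclideanSpace ℂ (Fin 3))
    (hv : ∀ y, v y = -gradient p₀ y)
    (hvτ : ∀ y, vτ y = v y - (inner ℝ (v y) (gradient ν y) : ℝ) • gradient ν y)
    (hu₀ : ∀ y, u₀ y = s⁻¹ • (cV (v y) - Complex.exp (-z * (ν y : ℂ)) • cV (vτ y))) :
    (∀ x ∈ U, divC u₀ x = -s⁻¹ * Complex.exp (-z * (ν x : ℂ)) * ((divR vτ x : ℝ) : ℂ))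
    ∧ (∀ x ∈ U, ν x = 0 → (inner ℝ (gradient p₀ x) (gradient ν x) : ℝ) = 0 → u₀ x = 0) := by
  constructor
  · intro x hx
    -- differentiability facts
    have hνd : DifferentiableAt ℝ ν x :=
      (hν.differentiableOn (by norm_num) x hx).differentiableAt (hU.mem_nhds hx)
    have hw : DifferentiableAt ℝ (gradient p₀) x := gradient_diffAt hU hp₀ (by exact WithTop.coe_le_coe.mpr le_top) hx
    have hnd : DifferentiableAt ℝ (gradient ν) x := gradient_diffAt hU hν (by norm_num) hx
    have hvf : v = fun y => -gradient p₀ y := funext hv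
    have hvd : DifferentiableAt ℝ v x := by rw [hvf]; exact hw.neg
    have hvτf : vτ = fun y => v y - (inner ℝ (v y) (gradient ν y) : ℝ) • gradient ν y :=
      funext hvτ
    have hvτd : DifferentiableAt ℝ vτ x := by
      rw [hvτf]; exact hvd.sub ((hvd.inner ℝ hnd).smul hnd)
    -- derivative of the exponential factor
    have hφ : HasFDerivAt (fun y => Complex.exp (-z * (ν y : ℂ)))
        (Complex.exp (-z * (ν x : ℂ)) •
          ((-z) • (Complex.ofRealCLM.comp (fderiv ℝ ν x)))) x := by
      have h1 : HasFDerivAt (fun y => ((ν y : ℝ) : ℂ))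
          (Complex.ofRealCLM.comp (fderiv ℝ ν x)) x :=
        Complex.ofRealCLM.hasFDerivAt.comp x hνd.hasFDerivAt
      exact (h1.const_mul (-z)).cexp
    have hcvv : HasFDerivAt (fun y => cV (v y)) (cVL.comp (fderiv ℝ v x)) x :=
      cVL.hasFDerivAt.comp x hvd.hasFDerivAt
    have hcvτ : HasFDerivAt (fun y => cV (vτ y)) (cVL.comp (fderiv ℝ vτ x)) x :=
      cVL.hasFDerivAt.comp x hvτd.hasFDerivAt
    have hu₀f : u₀ = fun y => s⁻¹ • (cV (v y) - Complex.exp (-z * (ν y : ℂ)) • cV (vτ y)) :=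
      funext hu₀
    have hDu : HasFDerivAt u₀
        (s⁻¹ • (cVL.comp (fderiv ℝ v x) -
          (Complex.exp (-z * (ν x : ℂ)) • (cVL.comp (fderiv ℝ vτ x)) +
           (Complex.exp (-z * (ν x : ℂ)) •
             ((-z) • (Complex.ofRealCLM.comp (fderiv ℝ ν x)))).smulRight (cV (vτ x))))) x := by
      rw [hu₀f]
      exact (hcvv.sub (hφ.smul hcvτ)).const_smul s⁻¹
    -- the three sums
    have hsum1 : ∑ i : Fin 3, fderiv ℝ v x (EuclideanSpace.single i 1) i = 0 := by
      have h1 : ∀ i : Fin 3, fderiv ℝ v x (EuclideanSpace.single i 1) i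
          = -(fderiv ℝ (fun y => fderiv ℝ p₀ y (EuclideanSpace.single i 1)) x
              (EuclideanSpace.single i 1)) := by
        intro i
        rw [fderiv_pi_apply hvd]
        have h2 : (fun y => v y i)
            = fun y => -(fderiv ℝ p₀ y (EuclideanSpace.single i 1)) := by
          funext y
          rw [hv, ← grad_apply]
          rfl
        rw [h2, fderiv_fun_neg]
        rfl
      calc ∑ i : Fin 3, fderiv ℝ v x (EuclideanSpace.single i 1) i
          = ∑ i : Fin 3, -(fderiv ℝ (fun y => fderiv ℝ p₀ y (EuclideanSpace.single i 1)) x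
              (EuclideanSpace.single i 1)) := Finset.sum_congr rfl fun i _ => h1 i
        _ = -(lap p₀ x) := by rw [Finset.sum_neg_distrib]; rfl
        _ = 0 := by rw [hharm x hx, neg_zero]
    have hsum2 : ∑ i : Fin 3, fderiv ℝ ν x (EuclideanSpace.single i 1) * vτ x i = 0 := by
      have h1 : ∑ i : Fin 3, fderiv ℝ ν x (EuclideanSpace.single i 1) * vτ x i
          = (inner ℝ (gradient ν x) (vτ x) : ℝ) := by
        rw [PiLp.inner_apply]
        exact Finset.sum_congr rfl fun i _ => by
          rw [← grad_apply]; simp [RCLike.inner_apply, mul_comm]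
      rw [h1, hvτ x, inner_sub_right, real_inner_smul_right,
        real_inner_self_eq_norm_sq, hgrad x hx, real_inner_comm]
      ring
    -- compute the divergence
    unfold divC
    rw [hDu.fderiv]
    simp only [ContinuousLinearMap.smul_apply, ContinuousLinearMap.sub_apply,
      ContinuousLinearMap.add_apply, ContinuousLinearMap.coe_comp', Function.comp_apply,
      ContinuousLinearMap.smulRight_apply, Complex.ofRealCLM_apply,
      PiLp.smul_apply, PiLp.sub_apply, PiLp.add_apply, smul_eq_mul, cVL_apply, cV_apply]
    have c1 := congrArg (fun t : ℝ => (t : ℂ)) hsum1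
    have c2 := congrArg (fun t : ℝ => (t : ℂ)) hsum2
    simp only [Complex.ofReal_sum, Complex.ofReal_mul, Complex.ofReal_zero] at c1 c2
    simp only [divR]
    rw [Fin.sum_univ_three] at c1 c2 ⊢
    rw [Fin.sum_univ_three (f := fun i => fderiv ℝ vτ x (EuclideanSpace.single i 1) i)]
    push_cast
    linear_combination s⁻¹ * c1 + s⁻¹ * Complex.exp (-z * (ν x : ℂ)) * z * c2
  · intro x hx h0 hperp
    have hvn : (inner ℝ (v x) (gradient ν x) : ℝ) = 0 := by
      rw [hv]
      rw [inner_neg_left, hperp, neg_zero]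
    have hvv : vτ x = v x := by rw [hvτ, hvn]; simp
    rw [hu₀, h0, hvv]
    simp
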